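/- Fix integers 1 ≤ r ≤ n/2 and let J_{n,r,r−1} be the 0–1 matrix indexed by r-element subsets of {1,…,n} whose (s,t) entry is 1 iff |s ∩ t| = r − 1, and let P = J_{n,r,r−1}/(r(n−r)). Then the largest eigenvalue of P is 1 (with eigenvalue r(n−r) of J), every other eigenvalue of P is at most (r(n−r) − n)/(r(n−r)), and hence the spectral gap of P is at least n/(r(n−r)) > 1/r. -/

import Mathlib

/-!
Let `M` be the inclusion matrix of `r`-subsets into `(r+1)`-subsets of an `n`-set. Counting
common subsets and supersets gives `M Mᵀ = J_{r+1} + (r+1) I` and `Mᵀ M = J_r + (n-r) I`,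
and `M Mᵀ`, `Mᵀ M` have the same nonzero eigenvalues. Hence an eigenvalue `μ ≠ -(r+1)` of
`J_{r+1}` yields the eigenvalue `μ + 2r + 1 - n` of `J_r`, and induction on `r` shows that
every eigenvalue of `J_r` other than `r(n-r)` (the eigenvalue of the all-ones vector) is at
most `r(n-r) - n`.
-/

namespace Matrix

open Module.End

variable {R : Type*} [CommRing R] {ι : Type*} [Fintype ι] [DecidableEq ι]

theorem hasEigenvalue_toLin'_iff {A : Matrix ι ι R} {μ : R} :
    HasEigenvalue (toLin' A) μ ↔ ∃ v ≠ 0, A *ᵥ v = μ • v := by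
  constructor
  · intro h
    obtain ⟨v, hv, hv0⟩ := h.exists_hasEigenvector
    exact ⟨v, hv0, by simpa using mem_eigenspace_iff.mp hv⟩
  · rintro ⟨v, hv0, hv⟩
    exact hasEigenvalue_of_hasEigenvector ⟨mem_eigenspace_iff.mpr (by simpa using hv), hv0⟩

theorem hasEigenvalue_toLin'_smul {A : Matrix ι ι R} {μ : R}
    (h : HasEigenvalue (toLin' A) μ) (a : R) : HasEigenvalue (toLin' (a • A)) (a * μ) := by
  obtain ⟨v, hv0, hv⟩ := hasEigenvalue_toLin'_iff.mp h
  exact hasEigenvalue_toLin'_iff.mpr ⟨v, hv0, by rw [smul_mulVec, hv, smul_smul]⟩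

theorem hasEigenvalue_toLin'_add_smul_one_iff {A : Matrix ι ι R} {μ c : R} :
    HasEigenvalue (toLin' (A + c • 1)) μ ↔ HasEigenvalue (toLin' A) (μ - c) := by
  rw [map_add, map_smul, toLin'_one]
  exact hasEigenvalue_add_iff

theorem hasEigenvalue_toLin'_mul_comm [IsDomain R] {κ : Type*} [Fintype κ] [DecidableEq κ]
    (B : Matrix ι κ R) (C : Matrix κ ι R) {μ : R} (hμ : μ ≠ 0)
    (h : HasEigenvalue (toLin' (B * C)) μ) : HasEigenvalue (toLin' (C * B)) μ := by
  obtain ⟨v, hv0, hv⟩ := hasEigenvalue_toLin'_iff.mp h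
  rw [← mulVec_mulVec] at hv
  refine hasEigenvalue_toLin'_iff.mpr ⟨C *ᵥ v, fun hCv => ?_, ?_⟩
  · rw [hCv, mulVec_zero, eq_comm, smul_eq_zero] at hv
    exact hv.elim hμ hv0
  · rw [← mulVec_mulVec, hv, mulVec_smul]

end Matrix

open Finset Matrix

abbrev CardSubset (α : Type*) (r : ℕ) := {s : Finset α // s.card = r}

namespace CardSubset

variable {α : Type*} [DecidableEq α]

theorem card_inter_lt {r : ℕ} {s t : CardSubset α r} (hst : s ≠ t) :
    (s.1 ∩ t.1).card < r := by
  have hss : s.1 ∩ t.1 ⊂ s.1 := Finset.ssubset_iff_subset_ne.mpr ⟨inter_subset_left, fun h =>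
    hst (Subtype.ext (eq_of_subset_of_card_le (inter_eq_left.mp h) (by rw [s.2, t.2])))⟩
  exact (card_lt_card hss).trans_eq s.2

variable [Fintype α]

theorem card_filter_subset (u : Finset α) (k : ℕ) :
    #{a : CardSubset α k | a.1 ⊆ u} = u.card.choose k := by
  rw [← card_powersetCard, ← card_map (Function.Embedding.subtype _)]
  congr 1
  ext s
  simp [mem_powersetCard, and_comm]

theorem card_filter_superset {k : ℕ} (u : Finset α) (hu : u.card ≤ k) :
    #{s : CardSubset α k | u ⊆ s.1} = (Fintype.card α - u.card).choose (k - u.card) := by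
  rw [← card_univ, ← card_filter_powersetCard_subset u univ k (subset_univ u) hu,
    ← card_map (Function.Embedding.subtype _)]
  congr 1
  ext s
  simp [mem_powersetCard, and_comm]

theorem card_filter_superset_eq_zero {k : ℕ} (u : Finset α) (hu : k < u.card) :
    #{s : CardSubset α k | u ⊆ s.1} = 0 := by
  rw [card_eq_zero, filter_eq_empty_iff]
  intro s _ hus
  have := card_le_card hus
  omega

end CardSubset

variable {α : Type*} [DecidableEq α]

-- `+ 1 = r` rather than the paper's `= r - 1`, so that `johnsonMatrix α 0 = 0` and the
-- eigenvalue recursion can start at `r = 0`.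
def johnsonMatrix (α : Type*) [DecidableEq α] (r : ℕ) :
    Matrix (CardSubset α r) (CardSubset α r) ℝ :=
  fun s t => if (s.1 ∩ t.1).card + 1 = r then 1 else 0

def inclusionMatrix (α : Type*) [DecidableEq α] (r : ℕ) :
    Matrix (CardSubset α (r + 1)) (CardSubset α r) ℝ :=
  fun s a => if a.1 ⊆ s.1 then 1 else 0

theorem johnsonMatrix_zero : johnsonMatrix α 0 = 0 := by
  ext s t
  simp [johnsonMatrix]

variable [Fintype α]

theorem inclusionMatrix_mul_transpose (r : ℕ) :
    inclusionMatrix α r * (inclusionMatrix α r)ᵀ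
      = johnsonMatrix α (r + 1) + ((r : ℝ) + 1) • 1 := by
  ext s t
  have hcount : (inclusionMatrix α r * (inclusionMatrix α r)ᵀ) s t
      = ((s.1 ∩ t.1).card.choose r : ℝ) := by
    rw [mul_apply, ← CardSubset.card_filter_subset, card_filter, Nat.cast_sum]
    refine sum_congr rfl fun a _ => ?_
    simp only [inclusionMatrix, transpose_apply, subset_inter_iff]
    split_ifs <;> simp_all
  rw [hcount, Matrix.add_apply, Matrix.smul_apply, one_apply, johnsonMatrix, smul_eq_mul]
  rcases eq_or_ne s t with rfl | hst
  · simp [s.2]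
  · rcases (Nat.lt_succ_iff.mp (CardSubset.card_inter_lt hst)).eq_or_lt with h | h
    · simp [h, hst]
    · simp [Nat.choose_eq_zero_of_lt h, hst, h.ne]

theorem transpose_inclusionMatrix_mul (r : ℕ) (hr : r ≤ Fintype.card α) :
    (inclusionMatrix α r)ᵀ * inclusionMatrix α r
      = johnsonMatrix α r + ((Fintype.card α : ℝ) - r) • 1 := by
  ext a b
  have hcount : ((inclusionMatrix α r)ᵀ * inclusionMatrix α r) a b
      = (#{s : CardSubset α (r + 1) | a.1 ∪ b.1 ⊆ s.1} : ℝ) := by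
    rw [mul_apply, card_filter, Nat.cast_sum]
    refine sum_congr rfl fun s _ => ?_
    simp only [inclusionMatrix, transpose_apply, union_subset_iff]
    split_ifs <;> simp_all
  have hunion := card_union_add_card_inter a.1 b.1
  rw [a.2, b.2] at hunion
  rw [hcount, Matrix.add_apply, Matrix.smul_apply, one_apply, johnsonMatrix, smul_eq_mul]
  rcases eq_or_ne a b with rfl | hab
  · rw [union_self, CardSubset.card_filter_superset _ (by omega), inter_self, a.2]
    simp [Nat.cast_sub hr, show r + 1 - r = 1 by omega]
  · have := CardSubset.card_inter_lt hab
    by_cases h : (a.1 ∩ b.1).card + 1 = r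
    · rw [CardSubset.card_filter_superset _ (by omega)]
      simp [h, hab, show r + 1 - (a.1 ∪ b.1).card = 0 by omega]
    · rw [CardSubset.card_filter_superset_eq_zero _ (by omega)]
      simp [h, hab]

theorem inclusionMatrix_mulVec_one (r : ℕ) :
    inclusionMatrix α r *ᵥ 1 = ((r : ℝ) + 1) • 1 := by
  ext s
  simp only [mulVec, dotProduct, inclusionMatrix, Pi.one_apply, mul_one, Pi.smul_apply,
    smul_eq_mul]
  rw [sum_boole, CardSubset.card_filter_subset, s.2, Nat.choose_succ_self_right]
  push_cast
  ring

theorem transpose_inclusionMatrix_mulVec_one (r : ℕ) (hr : r ≤ Fintype.card α) :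
    (inclusionMatrix α r)ᵀ *ᵥ 1 = ((Fintype.card α : ℝ) - r) • 1 := by
  ext a
  simp only [mulVec, dotProduct, inclusionMatrix, transpose_apply, Pi.one_apply, mul_one,
    Pi.smul_apply, smul_eq_mul]
  rw [sum_boole, CardSubset.card_filter_superset _ (by omega), a.2, show r + 1 - r = 1 by omega,
    Nat.choose_one_right, Nat.cast_sub hr]

theorem johnsonMatrix_mulVec_one (r : ℕ) (hr : r ≤ Fintype.card α) :
    johnsonMatrix α r *ᵥ 1 = ((r : ℝ) * (Fintype.card α - r)) • 1 := by
  cases r with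
  | zero => simp [johnsonMatrix_zero]
  | succ r =>
    rw [eq_sub_of_add_eq (inclusionMatrix_mul_transpose r).symm, sub_mulVec, ← mulVec_mulVec,
      transpose_inclusionMatrix_mulVec_one r (by omega), mulVec_smul, inclusionMatrix_mulVec_one,
      smul_mulVec, one_mulVec, smul_smul, ← sub_smul]
    congr 1
    push_cast
    ring

open Module.End

theorem hasEigenvalue_johnsonMatrix (r : ℕ) (hr : r ≤ Fintype.card α) :
    HasEigenvalue (toLin' (johnsonMatrix α r)) ((r : ℝ) * (Fintype.card α - r)) := by
  obtain ⟨s, -, hs⟩ := exists_subset_card_eq (show r ≤ (univ : Finset α).card by simpa)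
  have : Nonempty (CardSubset α r) := ⟨⟨s, hs⟩⟩
  exact hasEigenvalue_toLin'_iff.mpr ⟨1, one_ne_zero, johnsonMatrix_mulVec_one r hr⟩

theorem hasEigenvalue_johnsonMatrix_of_succ {r : ℕ} (hr : r + 1 ≤ Fintype.card α) {μ : ℝ}
    (hμ : HasEigenvalue (toLin' (johnsonMatrix α (r + 1))) μ) (hμr : μ ≠ -(r + 1)) :
    HasEigenvalue (toLin' (johnsonMatrix α r)) (μ + (2 * r + 1) - Fintype.card α) := by
  have hMMt : HasEigenvalue (toLin' (inclusionMatrix α r * (inclusionMatrix α r)ᵀ))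
      (μ + (r + 1)) := by
    rwa [inclusionMatrix_mul_transpose, hasEigenvalue_toLin'_add_smul_one_iff,
      add_sub_cancel_right]
  have hMtM := hasEigenvalue_toLin'_mul_comm _ _
    (fun h => hμr (eq_neg_of_add_eq_zero_left h)) hMMt
  rw [transpose_inclusionMatrix_mul r (by omega), hasEigenvalue_toLin'_add_smul_one_iff] at hMtM
  convert hMtM using 1
  ring

theorem johnsonMatrix_eigenvalue_le (r : ℕ) (hr : 2 * r ≤ Fintype.card α) {μ : ℝ}
    (hμ : HasEigenvalue (toLin' (johnsonMatrix α r)) μ) (hne : μ ≠ r * (Fintype.card α - r)) :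
    μ ≤ r * (Fintype.card α - r) - Fintype.card α := by
  induction r generalizing μ with
  | zero =>
    obtain ⟨v, hv0, hv⟩ := hasEigenvalue_toLin'_iff.mp hμ
    rw [johnsonMatrix_zero, zero_mulVec, eq_comm, smul_eq_zero] at hv
    simp [hv.resolve_right hv0] at hne
  | succ r ih =>
    have hn : 2 * ((r : ℝ) + 1) ≤ Fintype.card α := by exact_mod_cast hr
    push_cast at hne ⊢
    by_cases hμr : μ = -(r + 1)
    · nlinarith
    · have := ih (by omega) (hasEigenvalue_johnsonMatrix_of_succ (by omega) hμ hμr)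
        (fun h => hne (by linear_combination h))
      linear_combination this

/-- For `1 ≤ r` and `2r ≤ n`, the normalized Johnson-walk matrix
`P = J_{n,r,r-1} / (r(n-r))` has largest eigenvalue `1` (coming from the eigenvalue
`r(n-r)` of `J`), every other eigenvalue of `P` is at most `(r(n-r) - n)/(r(n-r))`, and
hence the spectral gap of `P` is at least `n/(r(n-r)) > 1/r`. -/
theorem stmt_5 (n r : ℕ) (hr : 1 ≤ r) (hn : 2 * r ≤ n)
    (J P : Matrix {s : Finset (Fin n) // s.card = r} {s : Finset (Fin n) // s.card = r} ℝ)
    (hJ : ∀ s t, J s t = if ((s : Finset (Fin n)) ∩ (t : Finset (Fin n))).card = r - 1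
      then (1 : ℝ) else 0)
    (hP : P = ((r : ℝ) * ((n : ℝ) - (r : ℝ)))⁻¹ • J) :
    Module.End.HasEigenvalue (Matrix.toLin' J) ((r : ℝ) * ((n : ℝ) - (r : ℝ))) ∧
    Module.End.HasEigenvalue (Matrix.toLin' P) 1 ∧
    (∀ μ : ℝ, Module.End.HasEigenvalue (Matrix.toLin' P) μ → μ ≤ 1) ∧
    (∀ μ : ℝ, Module.End.HasEigenvalue (Matrix.toLin' P) μ → μ ≠ 1 →
      μ ≤ ((r : ℝ) * ((n : ℝ) - (r : ℝ)) - (n : ℝ)) / ((r : ℝ) * ((n : ℝ) - (r : ℝ)))) ∧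
    (n : ℝ) / ((r : ℝ) * ((n : ℝ) - (r : ℝ))) > 1 / (r : ℝ) := by
  obtain rfl : J = johnsonMatrix (Fin n) r := by
    ext s t
    rw [hJ, johnsonMatrix]
    split_ifs <;> first | rfl | omega
  have hr' : (1 : ℝ) ≤ r := by exact_mod_cast hr
  have hn' : 2 * (r : ℝ) ≤ n := by exact_mod_cast hn
  set c : ℝ := r * (n - r)
  have hc : 0 < c := mul_pos (by linarith) (by linarith)
  have hJc : HasEigenvalue (toLin' (johnsonMatrix (Fin n) r)) c := by
    simpa using hasEigenvalue_johnsonMatrix (α := Fin n) r (by simp; omega)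
  have hgap : ∀ μ, HasEigenvalue (toLin' P) μ → μ ≠ 1 → μ ≤ (c - n) / c := by
    intro μ hμ hμ1
    have hcμ := hasEigenvalue_toLin'_smul hμ c
    rw [hP, smul_smul, mul_inv_cancel₀ hc.ne', one_smul] at hcμ
    rw [le_div_iff₀ hc, mul_comm]
    simpa using johnsonMatrix_eigenvalue_le r (by simpa) hcμ
      fun h => hμ1 (mul_left_cancel₀ hc.ne' (by simpa [c] using h))
  refine ⟨hJc, ?_, fun μ hμ => ?_, hgap, ?_⟩
  · simpa [hP, inv_mul_cancel₀ hc.ne'] using hasEigenvalue_toLin'_smul hJc c⁻¹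
  · by_cases hμ1 : μ = 1
    · exact hμ1.le
    · exact (hgap μ hμ hμ1).trans ((div_le_one hc).mpr (by linarith))
  · rw [gt_iff_lt, div_lt_div_iff₀ (by positivity) hc]
    nlinarith
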